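/- arXiv:2603.01304 — 2 statements merged into one kernel-verified Lean document; each statement's English description precedes it below -/
import Mathlib

section
/- For a vector x ∈ ℝ^N and ε > 0, the minimum over a common scalar τ ≥ 1 of the sum ∑_{n=1}^N φ_ε(x_n, τ) equals N · log√((1/N)∑_{n=1}^N (|x_n|/ε + 1)²), and this minimum is attained at τ = (1/N)∑_{n=1}^N (|x_n|/ε + 1)². -/
noncomputable def phiEps (ε x τ : ℝ) : ℝ :=
  (1 / (2 * τ)) * (|x| / ε + 1) ^ 2 + (1 / 2) * Real.log τ - 1 / 2

theorem stmt2 (N : ℕ) (hN : 1 ≤ N) (x : Fin N → ℝ) (ε : ℝ) (hε : 0 < ε) :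
    let t := (1 / (N : ℝ)) * ∑ n, (|x n| / ε + 1) ^ 2
    (1 ≤ t) ∧
    (∑ n, phiEps ε (x n) t = (N : ℝ) * Real.log (Real.sqrt t)) ∧
    (∀ τ : ℝ, 1 ≤ τ →
      (N : ℝ) * Real.log (Real.sqrt t) ≤ ∑ n, phiEps ε (x n) τ) := by
  intro t
  set S : ℝ := ∑ n, (|x n| / ε + 1) ^ 2 with hSdef
  have hNpos : (0 : ℝ) < N := by exact_mod_cast hN
  have hS : (N : ℝ) ≤ S := by
    have : ∀ n : Fin N, (1 : ℝ) ≤ (|x n| / ε + 1) ^ 2 := by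
      intro n
      have h0 : 0 ≤ |x n| / ε := div_nonneg (abs_nonneg _) hε.le
      nlinarith
    calc (N : ℝ) = ∑ _n : Fin N, (1 : ℝ) := by simp
    _ ≤ S := Finset.sum_le_sum fun n _ => this n
  have htSN : t = S / N := by
    show (1 : ℝ) / N * S = S / N
    rw [one_div_mul_eq_div]
  have ht1 : 1 ≤ t := by
    rw [htSN, le_div_iff₀ hNpos]; linarith
  have htpos : 0 < t := lt_of_lt_of_le one_pos ht1
  have hSt : S = (N : ℝ) * t := by
    rw [htSN]; field_simp
  have hsum : ∀ τ : ℝ, ∑ n, phiEps ε (x n) τ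
      = (1 / (2 * τ)) * S + (N : ℝ) * ((1 / 2) * Real.log τ) - (N : ℝ) * (1 / 2) := by
    intro τ
    simp only [phiEps, Finset.sum_sub_distrib, Finset.sum_add_distrib, ← Finset.mul_sum,
      Finset.sum_const, Finset.card_univ, Fintype.card_fin, nsmul_eq_mul, ← hSdef]
    ring
  have hlogsqrt : Real.log (Real.sqrt t) = (1 / 2) * Real.log t := by
    rw [Real.log_sqrt htpos.le]; ring
  refine ⟨ht1, ?_, ?_⟩
  · rw [hsum, hSt, hlogsqrt]
    field_simp
    ring
  · intro τ hτ
    have hτpos : 0 < τ := lt_of_lt_of_le one_pos hτ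
    rw [hsum, hSt, hlogsqrt]
    have hlog : Real.log (t / τ) ≤ t / τ - 1 :=
      Real.log_le_sub_one_of_pos (div_pos htpos hτpos)
    rw [Real.log_div htpos.ne' hτpos.ne'] at hlog
    have h1 : (1 / (2 * τ)) * ((N : ℝ) * t) = (N : ℝ) / 2 * (t / τ) := by
      field_simp
    rw [h1]
    nlinarith [mul_le_mul_of_nonneg_left hlog (by positivity : (0:ℝ) ≤ (N:ℝ)/2)]
end

section
/- Block decomposition property of the logarithmic block penalty: let B be a finite index set partitioned into B' and B'' with x restricted to B'' identically zero and x restricted to B' not identically zero. Define Θ_ε(x_B) = |B|·log√((1/|B|)∑_{n∈B}(|x_n|/ε + 1)²). Then Θ_ε(x_B) > Θ_ε(x_{B'}) + Θ_ε(x_{B''}) = Θ_ε(x_{B'}). -/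
noncomputable def Theta {ι : Type*} (ε : ℝ) (x : ι → ℝ) (S : Finset ι) : ℝ :=
  (S.card : ℝ) * Real.log (Real.sqrt ((1 / (S.card : ℝ)) * ∑ n ∈ S, (|x n| / ε + 1) ^ 2))

theorem stmt4 {ι : Type*} [DecidableEq ι] (ε : ℝ) (hε : 0 < ε)
    (B B' B'' : Finset ι) (x : ι → ℝ)
    (hdisj : Disjoint B' B'') (hunion : B = B' ∪ B'')
    (hB' : B'.Nonempty) (hB'' : B''.Nonempty)
    (hzero : ∀ n ∈ B'', x n = 0) (hnonzero : ∃ n ∈ B', x n ≠ 0) :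
    Theta ε x B'' = 0 ∧
    Theta ε x B' + Theta ε x B'' = Theta ε x B' ∧
    Theta ε x B' + Theta ε x B'' < Theta ε x B := by
  classical
  set a : ℝ := (B'.card : ℝ) with ha_def
  set b : ℝ := (B''.card : ℝ) with hb_def
  have ha : 0 < a := by rw [ha_def]; exact_mod_cast Finset.card_pos.mpr hB'
  have hb : 0 < b := by rw [hb_def]; exact_mod_cast Finset.card_pos.mpr hB''
  set S : ℝ := ∑ n ∈ B', (|x n| / ε + 1) ^ 2 with hS
  have hsum'' : ∑ n ∈ B'', (|x n| / ε + 1) ^ 2 = b := by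
    have h1 : ∑ n ∈ B'', (|x n| / ε + 1) ^ 2 = ∑ _n ∈ B'', (1:ℝ) :=
      Finset.sum_congr rfl (fun n hn => by rw [hzero n hn]; norm_num)
    rw [h1]; simp [hb_def]
  have hSa : a < S := by
    have h := Finset.sum_lt_sum (s := B') (f := fun _ : ι => (1:ℝ))
      (g := fun n => (|x n| / ε + 1) ^ 2) ?_ ?_
    · simpa [ha_def] using h
    · intro i _
      have : 0 ≤ |x i| / ε := div_nonneg (abs_nonneg _) hε.le
      nlinarith
    · obtain ⟨n, hn, hxn⟩ := hnonzero
      refine ⟨n, hn, ?_⟩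
      have h1 : 0 < |x n| / ε := div_pos (abs_pos.mpr hxn) hε
      nlinarith
  have hTB'' : Theta ε x B'' = 0 := by
    unfold Theta
    rw [hsum'', one_div, ← hb_def, inv_mul_cancel₀ hb.ne']
    simp
  refine ⟨hTB'', by rw [hTB'', add_zero], ?_⟩
  rw [hTB'', add_zero]
  have hcardB : (B.card : ℝ) = a + b := by
    rw [hunion, Finset.card_union_of_disjoint hdisj]; push_cast; ring
  have hsumB : ∑ n ∈ B, (|x n| / ε + 1) ^ 2 = S + b := by
    rw [hunion, Finset.sum_union hdisj, hsum'']
  unfold Theta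
  rw [hsumB, hcardB, ← ha_def, ← hS]
  have hSpos : 0 < S := lt_trans ha hSa
  have hab : 0 < a + b := by linarith
  rw [Real.log_sqrt (by positivity), Real.log_sqrt (by positivity)]
  have key : a * Real.log (S / a) < (a + b) * Real.log ((S + b) / (a + b)) := by
    have hx : (S / a) ∈ Set.Ioi (0:ℝ) := Set.mem_Ioi.mpr (by positivity)
    have hy : (1:ℝ) ∈ Set.Ioi (0:ℝ) := Set.mem_Ioi.mpr one_pos
    have hne : S / a ≠ 1 := by
      intro h
      rw [div_eq_one_iff_eq ha.ne'] at h
      linarith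
    have hwa : (0:ℝ) < a / (a + b) := by positivity
    have hwb : (0:ℝ) < b / (a + b) := by positivity
    have hwsum : a / (a + b) + b / (a + b) = 1 := by field_simp
    have hconc := strictConcaveOn_log_Ioi.2 hx hy hne hwa hwb hwsum
    simp only [smul_eq_mul, Real.log_one, mul_zero, add_zero] at hconc
    have heq : a / (a + b) * (S / a) + b / (a + b) * 1 = (S + b) / (a + b) := by
      field_simp
    rw [heq] at hconc
    have h2 := mul_lt_mul_of_pos_left hconc hab
    calc a * Real.log (S / a) = (a + b) * (a / (a + b) * Real.log (S / a)) := by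
          field_simp
      _ < _ := h2
  have e1 : 1 / a * S = S / a := by field_simp
  have e2 : 1 / (a + b) * (S + b) = (S + b) / (a + b) := by field_simp
  rw [e1, e2, mul_div_assoc', mul_div_assoc']
  linarith
end
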